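/- Let ψ: M^n → ℝ^d be an isometric immersion and q a positive integer with q < n/2. Then the q-th Lovelock tensor of the induced metric g = ψ*δ̄ is proportional to the 2q-th Newton transformation of the immersion: G_{(q)} = −((2q)!/2) T_{(2q)}. -/

import Mathlib

/-!
Raising the last two indices in the Gauss equation gives
`R_{ab}^{cd} = ⟨B^c_a, B^d_b⟩ − ⟨B^d_a, B^c_b⟩`. In the Lovelock contraction the upper indices of
the `s`-th curvature factor form the `s`-th index pair of the generalized Kronecker delta, which
is alternating in them, so the second term of each factor (the first one with the pair swapped)
contributes exactly as much as the first. The `q` factors thus produce `2 ^ q` times the Newton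
contraction, and `−2^{−(q+1)} · 2^q = −(2q)!/2 · 1/(2q)!`.
-/

open scoped BigOperators RealInnerProductSpace

/-- Generalized Kronecker delta `δ^{a_1…a_k}_{b_1…b_k}`. -/
noncomputable def gkd {n k : ℕ} (a b : Fin k → Fin n) : ℝ :=
  Matrix.det (Matrix.of fun i j => if a i = b j then (1 : ℝ) else 0)

/-- First member of the `s`-th index pair. -/
def pr1 {q : ℕ} (s : Fin q) : Fin (2 * q) := ⟨2 * s.1, by have := s.2; omega⟩

/-- Second member of the `s`-th index pair. -/
def pr2 {q : ℕ} (s : Fin q) : Fin (2 * q) := ⟨2 * s.1 + 1, by have := s.2; omega⟩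

open Finset Function Equiv

theorem gkd_comp_perm {n k : ℕ} (A B : Fin k → Fin n) (σ : Perm (Fin k)) :
    gkd A (B ∘ σ) = (Perm.sign σ : ℝ) * gkd A B := by
  unfold gkd
  exact Matrix.det_permute' σ (Matrix.of fun i j => if A i = B j then (1 : ℝ) else 0)

theorem gkd_cons_comp_swap {n k : ℕ} (A : Fin (k + 1) → Fin n) (j : Fin n) (a : Fin k → Fin n)
    {x y : Fin k} (hxy : x ≠ y) :
    gkd A (Fin.cons j (a ∘ swap x y)) = -gkd A (Fin.cons j a) := by
  have hcons : (Fin.cons j (a ∘ swap x y) : Fin (k + 1) → Fin n) =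
      Fin.cons j a ∘ swap x.succ y.succ := by
    funext i
    cases i using Fin.cases with
    | zero => simp [swap_apply_of_ne_of_ne (Fin.succ_ne_zero x).symm (Fin.succ_ne_zero y).symm]
    | succ i => simp [(Fin.succ_injective k).swap_apply]
  rw [hcons, gkd_comp_perm, Perm.sign_swap ((Fin.succ_injective k).ne hxy)]
  simp

theorem pr1_ne_pr2 {q : ℕ} (s t : Fin q) : pr1 s ≠ pr2 t := by
  simp only [pr1, pr2, ne_eq, Fin.mk.injEq]
  omega

theorem pr1_injective {q : ℕ} : Injective (pr1 (q := q)) := by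
  intro s t h
  simp only [pr1, Fin.mk.injEq] at h
  omega

theorem pr2_injective {q : ℕ} : Injective (pr2 (q := q)) := by
  intro s t h
  simp only [pr2, Fin.mk.injEq] at h
  omega

section PairAntisymmetrization

variable {q : ℕ} {β R : Type*} [Fintype β] [CommRing R]

theorem sum_mul_prod_update_sub_swap (D : (Fin (2 * q) → β) → R) (j : Fin q)
    (hD : ∀ a, D (a ∘ swap (pr1 j) (pr2 j)) = -D a) (y : Fin q → β → β → R) :
    ∑ a, D a * ∏ s, update y j (fun u v => y j u v - y j v u) s (a (pr1 s)) (a (pr2 s)) =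
      2 * ∑ a, D a * ∏ s, y s (a (pr1 s)) (a (pr2 s)) := by
  set τ := swap (pr1 j) (pr2 j)
  set H : (Fin (2 * q) → β) → R := fun a => ∏ s ∈ univ.erase j, y s (a (pr1 s)) (a (pr2 s))
  have hsplit : ∀ (w : β → β → R) a,
      ∏ s, update y j w s (a (pr1 s)) (a (pr2 s)) = w (a (pr1 j)) (a (pr2 j)) * H a := by
    intro w a
    rw [← mul_prod_erase univ _ (mem_univ j), update_self]
    congr 1
    exact prod_congr rfl fun s hs => by rw [update_of_ne (ne_of_mem_erase hs)]
  have hH : ∀ a, H (a ∘ τ) = H a := by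
    intro a
    refine prod_congr rfl fun s hs => ?_
    have hsj : s ≠ j := ne_of_mem_erase hs
    simp only [comp_apply, τ, swap_apply_of_ne_of_ne (pr1_injective.ne hsj) (pr1_ne_pr2 s j),
      swap_apply_of_ne_of_ne (pr1_ne_pr2 j s).symm (pr2_injective.ne hsj)]
  have hτ : Involutive fun a : Fin (2 * q) → β => a ∘ τ := fun a => by
    funext i
    simp [τ]
  have hflip : ∑ a, D a * (y j (a (pr2 j)) (a (pr1 j)) * H a) =
      -∑ a, D a * (y j (a (pr1 j)) (a (pr2 j)) * H a) := by
    rw [← Equiv.sum_comp (hτ.toPerm _), ← sum_neg_distrib]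
    refine sum_congr rfl fun a _ => ?_
    simp [τ, hD, hH]
  calc ∑ a, D a * ∏ s, update y j (fun u v => y j u v - y j v u) s (a (pr1 s)) (a (pr2 s))
      = ∑ a, D a * (y j (a (pr1 j)) (a (pr2 j)) * H a) -
          ∑ a, D a * (y j (a (pr2 j)) (a (pr1 j)) * H a) := by
        simp only [hsplit, ← sum_sub_distrib]
        exact sum_congr rfl fun a _ => by ring
    _ = 2 * ∑ a, D a * ∏ s, y s (a (pr1 s)) (a (pr2 s)) := by
        have hy : ∀ a, ∏ s, y s (a (pr1 s)) (a (pr2 s)) = y j (a (pr1 j)) (a (pr2 j)) * H a :=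
          fun a => by simpa using hsplit (y j) a
        simp only [hflip, hy]
        ring

theorem sum_mul_prod_sub_swap (D : (Fin (2 * q) → β) → R)
    (hD : ∀ j a, D (a ∘ swap (pr1 j) (pr2 j)) = -D a) (x : Fin q → β → β → R) :
    ∑ a, D a * ∏ s, (x s (a (pr1 s)) (a (pr2 s)) - x s (a (pr2 s)) (a (pr1 s))) =
      2 ^ q * ∑ a, D a * ∏ s, x s (a (pr1 s)) (a (pr2 s)) := by
  let antisymmOn (t : Finset (Fin q)) : Fin q → β → β → R :=
    fun s u v => if s ∈ t then x s u v - x s v u else x s u v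
  suffices h : ∀ t, ∑ a, D a * ∏ s, antisymmOn t s (a (pr1 s)) (a (pr2 s)) =
      2 ^ #t * ∑ a, D a * ∏ s, x s (a (pr1 s)) (a (pr2 s)) by
    simpa [antisymmOn] using h univ
  intro t
  induction t using Finset.induction_on with
  | empty => simp [antisymmOn]
  | insert j t hj ih =>
    have hinsert : antisymmOn (insert j t) =
        update (antisymmOn t) j (fun u v => antisymmOn t j u v - antisymmOn t j v u) := by
      funext s u v
      by_cases hs : s = j
      · subst hs
        simp [antisymmOn, hj]
      · simp [antisymmOn, hs]
    rw [hinsert, sum_mul_prod_update_sub_swap D j (hD j), ih, card_insert_of_notMem hj, pow_succ]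
    ring

end PairAntisymmetrization

theorem sum_gkd_mul_prod_sub_swap {n q : ℕ} (k j : Fin n)
    (x : (Fin (2 * q) → Fin n) → Fin q → Fin n → Fin n → ℝ) :
    ∑ a : Fin (2 * q) → Fin n, ∑ b : Fin (2 * q) → Fin n,
        gkd (Fin.cons k b : Fin (2 * q + 1) → Fin n) (Fin.cons j a) *
          ∏ s, (x b s (a (pr1 s)) (a (pr2 s)) - x b s (a (pr2 s)) (a (pr1 s))) =
      2 ^ q * ∑ a : Fin (2 * q) → Fin n, ∑ b : Fin (2 * q) → Fin n,
        gkd (Fin.cons k b : Fin (2 * q + 1) → Fin n) (Fin.cons j a) *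
          ∏ s, x b s (a (pr1 s)) (a (pr2 s)) := by
  conv_lhs => rw [sum_comm]
  conv_rhs => rw [sum_comm, mul_sum]
  exact sum_congr rfl fun b _ => sum_mul_prod_sub_swap _
    (fun s a => gkd_cons_comp_swap _ j a (pr1_ne_pr2 s s)) (x b)

theorem isSymm_of_mul_eq_one {n : Type*} [Fintype n] [DecidableEq n] {R : Type*} [CommRing R]
    {g ginv : Matrix n n R} (hg : g.IsSymm) (h : g * ginv = 1) : ginv.IsSymm :=
  Matrix.inv_eq_right_inv h ▸ hg.inv

section Gauss

variable {ι W : Type*} [Fintype ι] [NormedAddCommGroup W] [InnerProductSpace ℝ W]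

theorem inner_sum_smul_sum_smul (c d : ι → ℝ) (v w : ι → W) :
    ⟪∑ e, c e • v e, ∑ f, d f • w f⟫ = ∑ e, ∑ f, c e * d f * ⟪v e, w f⟫ := by
  rw [sum_inner]
  refine sum_congr rfl fun e _ => ?_
  rw [inner_sum]
  refine sum_congr rfl fun f _ => ?_
  rw [real_inner_smul_left, real_inner_smul_right, mul_assoc]

theorem gauss_raise (ginv : Matrix ι ι ℝ) (hginv : ginv.IsSymm) (B : ι → ι → W)
    (hB : ∀ i j, B i j = B j i) (b₁ b₂ a₁ a₂ : ι) :
    ∑ e, ∑ f, (⟪B b₁ e, B b₂ f⟫ - ⟪B b₁ f, B b₂ e⟫) * ginv e a₁ * ginv f a₂ =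
      ⟪∑ c, ginv a₁ c • B c b₁, ∑ c, ginv a₂ c • B c b₂⟫ -
        ⟪∑ c, ginv a₂ c • B c b₁, ∑ c, ginv a₁ c • B c b₂⟫ := by
  have hg : ∀ e a, ginv e a = ginv a e := fun e a => hginv.apply a e
  rw [inner_sum_smul_sum_smul, inner_sum_smul_sum_smul]
  conv_rhs => arg 2; rw [sum_comm]
  rw [← sum_sub_distrib]
  refine sum_congr rfl fun e _ => ?_
  rw [← sum_sub_distrib]
  refine sum_congr rfl fun f _ => ?_
  rw [hg e a₁, hg f a₂, hB b₁ e, hB b₂ f, hB b₁ f, hB b₂ e]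
  ring

end Gauss

theorem lovelock_is_newton_general (n q d : ℕ)
    (g ginv : Matrix (Fin n) (Fin n) ℝ)
    (hgsym : ∀ i j, g i j = g j i)
    (hinv : ∀ i j, (∑ k, g i k * ginv k j) = if i = j then (1 : ℝ) else 0)
    (W : Type) [NormedAddCommGroup W] [InnerProductSpace ℝ W]
    (Blow : Fin n → Fin n → W)
    (hBsym : ∀ i j, Blow i j = Blow j i)
    (Bm : Fin n → Fin n → W)
    (hBm : ∀ a b, Bm a b = ∑ c, ginv a c • Blow c b)
    (Rlow : Fin n → Fin n → Fin n → Fin n → ℝ)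
    (hGauss : ∀ i j k l, Rlow i j k l = ⟪Blow i k, Blow j l⟫ - ⟪Blow i l, Blow j k⟫)
    (Rmix : Fin n → Fin n → Fin n → Fin n → ℝ)   -- Rmix a b c d = R_{ab}^{cd}
    (hRmix : ∀ a b c d, Rmix a b c d = ∑ e, ∑ f, Rlow a b e f * ginv e c * ginv f d)
    (G : Matrix (Fin n) (Fin n) ℝ)
    (hG : ∀ i j, G i j = -(1 / 2 ^ (q + 1)) * ∑ k, g i k *
      ∑ a : Fin (2 * q) → Fin n, ∑ b : Fin (2 * q) → Fin n,
        gkd (Fin.cons k b : Fin (2 * q + 1) → Fin n) (Fin.cons j a) *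
        ∏ s : Fin q, Rmix (b (pr1 s)) (b (pr2 s)) (a (pr1 s)) (a (pr2 s)))
    (T : Matrix (Fin n) (Fin n) ℝ)
    (hT : ∀ i j, T i j = (1 / ((2 * q).factorial : ℝ)) * ∑ k, g i k *
      ∑ a : Fin (2 * q) → Fin n, ∑ b : Fin (2 * q) → Fin n,
        gkd (Fin.cons k b : Fin (2 * q + 1) → Fin n) (Fin.cons j a) *
        ∏ s : Fin q,
          ⟪Bm (a (pr1 s)) (b (pr1 s)), Bm (a (pr2 s)) (b (pr2 s))⟫) :
    ∀ i j, G i j = -(((2 * q).factorial : ℝ) / 2) * T i j := by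
  intro i j
  have hginv : ginv.IsSymm := isSymm_of_mul_eq_one (Matrix.IsSymm.ext fun a b => hgsym b a)
    (Matrix.ext fun a b => by simpa [Matrix.mul_apply, Matrix.one_apply] using hinv a b)
  have hR : ∀ b₁ b₂ a₁ a₂, Rmix b₁ b₂ a₁ a₂ = ⟪Bm a₁ b₁, Bm a₂ b₂⟫ - ⟪Bm a₂ b₁, Bm a₁ b₂⟫ := by
    intro b₁ b₂ a₁ a₂
    simp only [hRmix, hGauss, hBm]
    exact gauss_raise ginv hginv Blow hBsym b₁ b₂ a₁ a₂
  simp only [hG, hT, hR, sum_gkd_mul_prod_sub_swap (x := fun b s u v =>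
    ⟪Bm u (b (pr1 s)), Bm v (b (pr2 s))⟫), mul_left_comm (g i _), ← mul_sum]
  have hfac : ((2 * q).factorial : ℝ) ≠ 0 := by positivity
  field_simp
  ring

/-- for an isometric immersion `ψ : M^n → ℝ^d` and `0 < q < n/2`, the `q`-th
Lovelock tensor of the induced metric is proportional to the `2q`-th Newton
transformation: `G_{(q)} = −((2q)!/2) T_{(2q)}`.

Formalized pointwise in coordinates: `Rlow` is the fully lowered Riemann tensor of the
induced metric, related to the (symmetric, normal-valued) second fundamental form `Blow`
by the Gauss equation `R_{ijkl} = ⟨B_{ik},B_{jl}⟩ − ⟨B_{il},B_{jk}⟩`; `Rmix a b c d =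
R_{ab}^{cd}` is obtained by raising the last two indices; `G` is the `q`-th Lovelock
tensor and `T` the `2q`-th Newton transformation (via `Bm a b = B^a_b`). -/
theorem lovelock_is_newton (n q d : ℕ) (hq : 0 < q) (hqn : 2 * q < n) (hd : n < d)
    (g ginv : Matrix (Fin n) (Fin n) ℝ)
    (hgsym : ∀ i j, g i j = g j i)
    (hinv : ∀ i j, (∑ k, g i k * ginv k j) = if i = j then (1 : ℝ) else 0)
    (hinv' : ∀ i j, (∑ k, ginv i k * g k j) = if i = j then (1 : ℝ) else 0)
    (W : Type) [NormedAddCommGroup W] [InnerProductSpace ℝ W]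
    (Blow : Fin n → Fin n → W)
    (hBsym : ∀ i j, Blow i j = Blow j i)
    (Bm : Fin n → Fin n → W)
    (hBm : ∀ a b, Bm a b = ∑ c, ginv a c • Blow c b)
    (Rlow : Fin n → Fin n → Fin n → Fin n → ℝ)
    (hGauss : ∀ i j k l, Rlow i j k l = ⟪Blow i k, Blow j l⟫ - ⟪Blow i l, Blow j k⟫)
    (Rmix : Fin n → Fin n → Fin n → Fin n → ℝ)   -- Rmix a b c d = R_{ab}^{cd}
    (hRmix : ∀ a b c d, Rmix a b c d = ∑ e, ∑ f, Rlow a b e f * ginv e c * ginv f d)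
    (G : Matrix (Fin n) (Fin n) ℝ)
    (hG : ∀ i j, G i j = -(1 / 2 ^ (q + 1)) * ∑ k, g i k *
      ∑ a : Fin (2 * q) → Fin n, ∑ b : Fin (2 * q) → Fin n,
        gkd (Fin.cons k b : Fin (2 * q + 1) → Fin n) (Fin.cons j a) *
        ∏ s : Fin q, Rmix (b (pr1 s)) (b (pr2 s)) (a (pr1 s)) (a (pr2 s)))
    (T : Matrix (Fin n) (Fin n) ℝ)
    (hT : ∀ i j, T i j = (1 / ((2 * q).factorial : ℝ)) * ∑ k, g i k *
      ∑ a : Fin (2 * q) → Fin n, ∑ b : Fin (2 * q) → Fin n,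
        gkd (Fin.cons k b : Fin (2 * q + 1) → Fin n) (Fin.cons j a) *
        ∏ s : Fin q,
          ⟪Bm (a (pr1 s)) (b (pr1 s)), Bm (a (pr2 s)) (b (pr2 s))⟫) :
    ∀ i j, G i j = -(((2 * q).factorial : ℝ) / 2) * T i j :=
  lovelock_is_newton_general n q d g ginv hgsym hinv W Blow hBsym Bm hBm Rlow hGauss Rmix hRmix G hG
    T hT
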